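/- In a Boolean algebra, if P is an infinite independent subset, then for every subset X ⊆ P, the set X ∪ {¬a : a ∈ P \ X} has the finite intersection property and hence extends to an ultrafilter F_X; moreover X ≠ Y implies F_X ≠ F_Y. Consequently a Boolean algebra with an independent subset of cardinality κ has at least 2^κ ultrafilters. -/
import Mathlib


/-- An ultrafilter of a Boolean algebra: a proper filter that contains `a` or `aᶜ`
for every element `a` (equivalently, a maximal proper filter). -/
structure BUltrafilter (A : Type) [BooleanAlgebra A] : Type where
  carrier : Set A
  top_mem : ⊤ ∈ carrier
  bot_not_mem : ⊥ ∉ carrier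
  inf_mem : ∀ a b, a ∈ carrier → b ∈ carrier → a ⊓ b ∈ carrier
  mem_of_le : ∀ a b, a ∈ carrier → a ≤ b → b ∈ carrier
  mem_or_compl_mem : ∀ a, a ∈ carrier ∨ aᶜ ∈ carrier

/-- The relation of the canonical frame of a modal algebra `(A, l)`:
`F R G` iff `{a | l a ∈ F} ⊆ G`. -/
def CanRel {A : Type} [BooleanAlgebra A] (l : A → A) (F G : BUltrafilter A) : Prop :=
  ∀ a, l a ∈ F.carrier → a ∈ G.carrier

open Classical in
/-- proper filter -/
def IsPF {A : Type} [BooleanAlgebra A] (G : Set A) : Prop :=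
  ⊥ ∉ G ∧ ⊤ ∈ G ∧ (∀ a b, a ∈ G → b ∈ G → a ⊓ b ∈ G) ∧ (∀ a b, a ∈ G → a ≤ b → b ∈ G)

lemma exists_bultra {A : Type} [BooleanAlgebra A] {B : Set A}
    (hB : ∀ S : Finset A, ↑S ⊆ B → S.inf id ≠ ⊥) :
    ∃ F : BUltrafilter A, B ⊆ F.carrier := by
  classical
  set F0 : Set A := {a | ∃ S : Finset A, ↑S ⊆ B ∧ S.inf id ≤ a} with hF0def
  have hF0 : IsPF F0 := by
    refine ⟨?_, ⟨∅, by simp⟩, ?_, ?_⟩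
    · rintro ⟨S, hS, hle⟩
      exact hB S hS (le_bot_iff.mp hle)
    · rintro a b ⟨S, hS, hSa⟩ ⟨T, hT, hTb⟩
      refine ⟨S ∪ T, by simp [Set.union_subset_iff]; exact ⟨hS, hT⟩, ?_⟩
      rw [Finset.inf_union]
      exact inf_le_inf hSa hTb
    · rintro a b ⟨S, hS, hSa⟩ hab
      exact ⟨S, hS, hSa.trans hab⟩
  have hBF0 : B ⊆ F0 := fun a ha => ⟨{a}, by simpa using ha, by simp⟩
  obtain ⟨M, hsub, hMmem, hMmax⟩ :
      ∃ M, F0 ⊆ M ∧ IsPF M ∧ ∀ N, IsPF N → M ⊆ N → N ⊆ M := by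
    have hch : ∀ c ⊆ {G : Set A | IsPF G}, IsChain (· ⊆ ·) c → c.Nonempty →
        ∃ ub ∈ {G : Set A | IsPF G}, ∀ s ∈ c, s ⊆ ub := by
      rintro c hc hchain ⟨G0, hG0⟩
      refine ⟨⋃₀ c, ⟨?_, ?_, ?_, ?_⟩, fun s hs => Set.subset_sUnion_of_mem hs⟩
      · rintro ⟨G, hG, hbot⟩
        exact (hc hG).1 hbot
      · exact ⟨G0, hG0, (hc hG0).2.1⟩
      · rintro a b ⟨G1, hG1, ha⟩ ⟨G2, hG2, hb⟩
        rcases hchain.total hG1 hG2 with h | h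
        · exact ⟨G2, hG2, (hc hG2).2.2.1 a b (h ha) hb⟩
        · exact ⟨G1, hG1, (hc hG1).2.2.1 a b ha (h hb)⟩
      · rintro a b ⟨G, hG, ha⟩ hab
        exact ⟨G, hG, (hc hG).2.2.2 a b ha hab⟩
    obtain ⟨M, h1, h2⟩ := zorn_subset_nonempty {G : Set A | IsPF G} hch F0 hF0
    exact ⟨M, h1, h2.1, fun N hN hMN => h2.2 hN hMN⟩
  obtain ⟨hbot, htop, hinf, hup⟩ := hMmem
  refine ⟨⟨M, htop, hbot, hinf, hup, ?_⟩, hBF0.trans hsub⟩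
  intro a
  by_contra h
  push_neg at h
  obtain ⟨ha, hac⟩ := h
  set M' : Set A := {c | ∃ b ∈ M, b ⊓ a ≤ c} with hM'def
  have hM' : IsPF M' := by
    refine ⟨?_, ⟨⊤, htop, le_top⟩, ?_, ?_⟩
    · rintro ⟨b, hb, hle⟩
      have : b ≤ aᶜ := by
        rwa [le_compl_iff_disjoint_right, disjoint_iff_inf_le]
      exact hac (hup b aᶜ hb this)
    · rintro c d ⟨b1, hb1, h1⟩ ⟨b2, hb2, h2⟩
      refine ⟨b1 ⊓ b2, hinf _ _ hb1 hb2, ?_⟩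
      calc b1 ⊓ b2 ⊓ a ≤ (b1 ⊓ a) ⊓ (b2 ⊓ a) :=
            le_inf (inf_le_inf_right a inf_le_left) (inf_le_inf_right a inf_le_right)
        _ ≤ c ⊓ d := inf_le_inf h1 h2
    · rintro c d ⟨b, hb, h1⟩ hcd
      exact ⟨b, hb, h1.trans hcd⟩
  have hMM' : M ⊆ M' := fun b hb => ⟨b, hb, inf_le_left⟩
  have : a ∈ M' := ⟨⊤, htop, by simp⟩
  exact ha (hMmax M' hM' hMM' this)

/-- A subset `P` of a Boolean algebra is independent if for any disjoint finite
subsets `X, Y` of `P`, the meet of the elements of `X` with the complements of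
the elements of `Y` is nonzero. -/
def IndependentSet {A : Type} [BooleanAlgebra A] (P : Set A) : Prop :=
  ∀ X Y : Finset A, ↑X ⊆ P → ↑Y ⊆ P → Disjoint X Y →
    X.inf id ⊓ Y.inf (fun a => aᶜ) ≠ ⊥

lemma fip_of_ind {A : Type} [BooleanAlgebra A] {P : Set A} (hind : IndependentSet P)
    {X : Set A} (hX : X ⊆ P) (S : Finset A)
    (hS : ↑S ⊆ X ∪ (fun a => aᶜ) '' (P \ X)) : S.inf id ≠ ⊥ := by
  classical
  set T1 := S.filter (· ∈ X) with hT1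
  set T2 := S.filter (· ∉ X) with hT2
  set Y' := T2.image (·ᶜ) with hY'
  have hT1P : ↑T1 ⊆ P := by
    intro a ha
    exact hX (Finset.mem_filter.mp ha).2
  have hY'PX : ↑Y' ⊆ P \ X := by
    intro y hy
    obtain ⟨s, hs, rfl⟩ := Finset.mem_image.mp hy
    obtain ⟨hsS, hsX⟩ := Finset.mem_filter.mp hs
    rcases hS hsS with h | ⟨a, haPX, rfl⟩
    · exact absurd h hsX
    · rwa [compl_compl]
  have hdisj : Disjoint T1 Y' := by
    rw [Finset.disjoint_left]
    intro a ha hay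
    exact (hY'PX hay).2 (Finset.mem_filter.mp ha).2
  have hkey := hind T1 Y' hT1P (hY'PX.trans (Set.diff_subset)) hdisj
  have hYinf : Y'.inf (fun a => aᶜ) = T2.inf id := by
    rw [hY', Finset.inf_image]
    exact Finset.inf_congr rfl (fun a _ => compl_compl a)
  have hSsplit : S.inf id = T1.inf id ⊓ T2.inf id := by
    conv_lhs => rw [← Finset.filter_union_filter_not_eq (· ∈ X) S]
    exact Finset.inf_union
  rw [hSsplit, ← hYinf]
  exact hkey

/-- If `P` is an infinite independent subset of a Boolean algebra `A`, then for
every `X ⊆ P` the set `X ∪ {aᶜ : a ∈ P \ X}` has the finite intersection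
property, hence extends to an ultrafilter `F_X`; distinct `X` give distinct
such ultrafilters, and consequently `A` has at least `2 ^ |P|` ultrafilters. -/
theorem independent_subset_many_ultrafilters {A : Type} [BooleanAlgebra A]
    (P : Set A) (hinf : P.Infinite) (hind : IndependentSet P) :
    (∀ X ⊆ P, ∀ S : Finset A, ↑S ⊆ X ∪ (fun a => aᶜ) '' (P \ X) →
      S.inf id ≠ ⊥) ∧
    (∀ X ⊆ P, ∃ F : BUltrafilter A,
      X ⊆ F.carrier ∧ ∀ a ∈ P \ X, aᶜ ∈ F.carrier) ∧
    (∀ X Y : Set A, X ⊆ P → Y ⊆ P → X ≠ Y →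
      ∀ F G : BUltrafilter A,
        (X ⊆ F.carrier ∧ ∀ a ∈ P \ X, aᶜ ∈ F.carrier) →
        (Y ⊆ G.carrier ∧ ∀ a ∈ P \ Y, aᶜ ∈ G.carrier) → F ≠ G) ∧
    2 ^ Cardinal.mk P ≤ Cardinal.mk (BUltrafilter A) := by
  classical
  have part1 : ∀ X ⊆ P, ∀ S : Finset A, ↑S ⊆ X ∪ (fun a => aᶜ) '' (P \ X) →
      S.inf id ≠ ⊥ := fun X hX S hS => fip_of_ind hind hX S hS
  have part2 : ∀ X ⊆ P, ∃ F : BUltrafilter A,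
      X ⊆ F.carrier ∧ ∀ a ∈ P \ X, aᶜ ∈ F.carrier := by
    intro X hX
    obtain ⟨F, hF⟩ := exists_bultra (B := X ∪ (fun a => aᶜ) '' (P \ X)) (part1 X hX)
    exact ⟨F, fun a ha => hF (Or.inl ha), fun a ha => hF (Or.inr ⟨a, ha, rfl⟩)⟩
  have part3 : ∀ X Y : Set A, X ⊆ P → Y ⊆ P → X ≠ Y →
      ∀ F G : BUltrafilter A,
        (X ⊆ F.carrier ∧ ∀ a ∈ P \ X, aᶜ ∈ F.carrier) →
        (Y ⊆ G.carrier ∧ ∀ a ∈ P \ Y, aᶜ ∈ G.carrier) → F ≠ G := by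
    rintro X Y hX hY hne F G ⟨hF1, hF2⟩ ⟨hG1, hG2⟩ heq
    subst heq
    obtain ⟨a, ha⟩ : ∃ a, (a ∈ X ∧ a ∉ Y) ∨ (a ∈ Y ∧ a ∉ X) := by
      by_contra h
      push_neg at h
      exact hne (Set.ext fun a => ⟨(h a).1, (h a).2⟩)
    have hbot : ∀ b : A, b ∈ F.carrier → bᶜ ∈ F.carrier → False := by
      intro b h1 h2
      have := F.inf_mem b bᶜ h1 h2
      rw [inf_compl_eq_bot] at this
      exact F.bot_not_mem this
    rcases ha with ⟨haX, haY⟩ | ⟨haY, haX⟩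
    · exact hbot a (hF1 haX) (hG2 a ⟨hX haX, haY⟩)
    · exact hbot a (hG1 haY) (hF2 a ⟨hY haY, haX⟩)
  refine ⟨part1, part2, part3, ?_⟩
  have hsub : ∀ X : Set P, Subtype.val '' X ⊆ P := by
    rintro X a ⟨x, _, rfl⟩; exact x.2
  have hex : ∀ X : Set P, ∃ F : BUltrafilter A,
      Subtype.val '' X ⊆ F.carrier ∧ ∀ a ∈ P \ Subtype.val '' X, aᶜ ∈ F.carrier :=
    fun X => part2 _ (hsub X)
  choose f hf using hex
  have hinj : Function.Injective f := by
    intro X Y hXY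
    by_contra hne
    have himne : Subtype.val '' X ≠ Subtype.val '' Y :=
      fun h => hne (Set.image_injective.mpr Subtype.val_injective h)
    exact part3 _ _ (hsub X) (hsub Y) himne (f X) (f Y) (hf X) (hf Y) hXY
  calc 2 ^ Cardinal.mk P = Cardinal.mk (Set P) := Cardinal.mk_set.symm
    _ ≤ Cardinal.mk (BUltrafilter A) := Cardinal.mk_le_of_injective hinj
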